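/- Assume 𝔟 = 𝔠. Then Laver forcing has the disjoint maximal antichain property: there is a maximal antichain (T_α : α < 𝔠) of Laver trees with [T_α] ∩ [T_β] = ∅ for all α ≠ β. -/

import Mathlib

/-!
Enumerate all sets of finite sequences in order type `𝔠` and build the antichain greedily: at
stage `i`, if the `i`-th set is a Laver tree incompatible with the fewer than `𝔠 = 𝔟` members
chosen so far, add a Laver subtree of it whose branches avoid theirs.

Such a subtree exists because incompatibility of Laver trees `S` and `T` is witnessed by an
ordinal rank on `S ∩ T` that drops as soon as a node is extended by a large enough successor,
above a bound `g_T`. Pruning `S` above its stem by one function dominating all the fewer than `𝔟`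
bounds `g_T` kills every common branch with every `T`: along it the rank would descend forever.

To get `𝔠` members, every added tree is either inside a parity tree or incompatible with all of
them. Then each `parityTree [] a` is compatible with a member of the first kind, and that member
determines `a`.
-/

/-- The restriction `x↾n` of a sequence `x ∈ ω^ω` to its first `n` values, as a finite sequence. -/
def seqRestrict (x : ℕ → ℕ) (n : ℕ) : List ℕ := List.ofFn fun i : Fin n => x i

def IsSeqTree (T : Set (List ℕ)) : Prop :=
  T.Nonempty ∧ ∀ s ∈ T, ∀ t : List ℕ, t <+: s → t ∈ T

/-- `[T]`, the set of branches of a tree `T ⊆ ω^{<ω}`. -/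
def branches (T : Set (List ℕ)) : Set (ℕ → ℕ) := {x | ∀ n : ℕ, seqRestrict x n ∈ T}

def Compat (𝕋 : Set (Set (List ℕ))) (S T : Set (List ℕ)) : Prop :=
  ∃ R ∈ 𝕋, R ⊆ S ∧ R ⊆ T

def IsLaverWithStem (T : Set (List ℕ)) (st : List ℕ) : Prop :=
  IsSeqTree T ∧ st ∈ T ∧ (∀ t ∈ T, t <+: st ∨ st <+: t) ∧
    ∀ t ∈ T, st <+: t → {n : ℕ | t ++ [n] ∈ T}.Infinite

def IsLaver (T : Set (List ℕ)) : Prop := ∃ st : List ℕ, IsLaverWithStem T st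

noncomputable def boundingNumber : Cardinal :=
  sInf {c : Cardinal | ∃ F : Set (ℕ → ℕ), Cardinal.mk F = c ∧
    ∀ f : ℕ → ℕ, ∃ g ∈ F, ¬ (∀ᶠ n in Filter.atTop, g n ≤ f n)}

open Cardinal Filter Set

universe u

abbrev laverTrees : Set (Set (List ℕ)) := {T | IsLaver T}

lemma seqRestrict_length (x : ℕ → ℕ) (n : ℕ) : (seqRestrict x n).length = n := by
  simp [seqRestrict]

lemma getElem_seqRestrict (x : ℕ → ℕ) {n i : ℕ} (h : i < (seqRestrict x n).length) :
    (seqRestrict x n)[i] = x i := by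
  simp [seqRestrict]

lemma seqRestrict_succ (x : ℕ → ℕ) (n : ℕ) :
    seqRestrict x (n + 1) = seqRestrict x n ++ [x n] := by
  rw [seqRestrict, List.ofFn_succ_last]
  rfl

lemma seqRestrict_injective (x : ℕ → ℕ) : Function.Injective (seqRestrict x) :=
  fun m n h => by simpa [seqRestrict_length] using congrArg List.length h

lemma seqRestrict_eq_iff {x y : ℕ → ℕ} {n : ℕ} :
    seqRestrict x n = seqRestrict y n ↔ ∀ i < n, x i = y i := by
  simp [seqRestrict, List.ofFn_inj, funext_iff, Fin.forall_iff]

lemma branches_mono {S T : Set (List ℕ)} (h : S ⊆ T) : branches S ⊆ branches T :=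
  fun _ hx n => h (hx n)

lemma exists_seqRestrict_prefix_of_chain {p : ℕ → List ℕ} (hp : ∀ k, p k <+: p (k + 1))
    (hlen : ∀ k, k ≤ (p k).length) : ∃ x : ℕ → ℕ, ∀ n, seqRestrict x n <+: p n := by
  have hmono : ∀ {m n}, m ≤ n → p m <+: p n := fun hmn =>
    Nat.le_induction (List.prefix_refl _) (fun _ _ ih => ih.trans (hp _)) _ hmn
  refine ⟨fun i => (p (i + 1))[i]'(hlen _), fun n => List.prefix_iff_eq_take.mpr ?_⟩
  refine List.ext_getElem (by simpa [seqRestrict_length] using hlen n) fun i hi _ => ?_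
  simp only [getElem_seqRestrict, List.getElem_take, seqRestrict_length]
  exact (hmono (by simpa [seqRestrict_length] using hi)).getElem _

lemma IsLaverWithStem.branches_nonempty {T : Set (List ℕ)} {st : List ℕ}
    (hT : IsLaverWithStem T st) : (branches T).Nonempty := by
  classical
  obtain ⟨⟨-, hclosed⟩, hst, -, hsplit⟩ := hT
  let next (t : List ℕ) : List ℕ :=
    if h : t ∈ T ∧ st <+: t then t ++ [(hsplit t h.1 h.2).nonempty.choose] else t
  have hnext : ∀ t, t ∈ T ∧ st <+: t → next t ∈ T ∧ st <+: next t ∧ t <+: next t ∧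
      (next t).length = t.length + 1 := fun t h => by
    simp only [next, dif_pos h]
    exact ⟨(hsplit t h.1 h.2).nonempty.choose_spec, h.2.trans (List.prefix_append _ _),
      List.prefix_append _ _, by simp⟩
  have hp : ∀ k, next^[k] st ∈ T ∧ st <+: next^[k] st ∧
      (next^[k] st).length = st.length + k := by
    intro k
    induction k with
    | zero => exact ⟨hst, List.prefix_refl _, rfl⟩
    | succ k ih =>
      obtain ⟨h₁, h₂, -, h₃⟩ := hnext _ ⟨ih.1, ih.2.1⟩
      rw [Function.iterate_succ_apply']
      exact ⟨h₁, h₂, by rw [h₃, ih.2.2]; rfl⟩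
  obtain ⟨x, hx⟩ := exists_seqRestrict_prefix_of_chain (p := fun k => next^[k] st)
    (fun k => by
      rw [Function.iterate_succ_apply']
      exact (hnext _ ⟨(hp k).1, (hp k).2.1⟩).2.2.1)
    (fun k => by simp only [(hp k).2.2]; omega)
  exact ⟨x, fun n => hclosed _ (hp n).1 _ (hx n)⟩

lemma not_compat_of_disjoint_branches {S T : Set (List ℕ)}
    (h : Disjoint (branches S) (branches T)) : ¬ Compat laverTrees S T := by
  rintro ⟨R, ⟨st, hR⟩, hRS, hRT⟩
  obtain ⟨x, hx⟩ := hR.branches_nonempty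
  exact h.ne_of_mem (branches_mono hRS hx) (branches_mono hRT hx) rfl

def parityTree (t : List ℕ) (a : ℕ → Bool) : Set (List ℕ) :=
  {s | (s <+: t ∨ t <+: s) ∧ ∀ i (h : i < s.length), t.length ≤ i → s[i].bodd = a i}

lemma parityTree_isLaverWithStem (t : List ℕ) (a : ℕ → Bool) :
    IsLaverWithStem (parityTree t a) t := by
  have ht : t ∈ parityTree t a := ⟨Or.inl (List.prefix_refl t), fun i h hi => by omega⟩
  refine ⟨⟨⟨t, ht⟩, ?_⟩, ht, fun s hs => hs.1, ?_⟩
  · rintro s ⟨hst, hbodd⟩ u hus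
    refine ⟨?_, fun i hi hti => ?_⟩
    · rcases hst with hst | hts
      · exact Or.inl (hus.trans hst)
      · exact List.prefix_or_prefix_of_prefix hus hts
    · rw [hus.getElem hi]
      exact hbodd i (hi.trans_le hus.length_le) hti
  · rintro s ⟨-, hbodd⟩ hts
    refine Set.infinite_of_injective_forall_mem (f := Nat.bit (a s.length))
      (fun m n h => by simpa [Nat.bit_val] using h) fun n => ⟨Or.inr (hts.trans ?_), ?_⟩
    · exact List.prefix_append _ _
    · intro i hi hti
      rcases Nat.lt_or_ge i s.length with his | his
      · rw [List.getElem_append_left his]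
        exact hbodd i his hti
      · obtain rfl : i = s.length := by simp at hi; omega
        simp [Nat.bodd_bit]

lemma mem_branches_parityTree {t : List ℕ} {a : ℕ → Bool} {x : ℕ → ℕ}
    (hx : x ∈ branches (parityTree t a)) :
    seqRestrict x t.length = t ∧ ∀ i, t.length ≤ i → (x i).bodd = a i := by
  refine ⟨?_, fun i hi => ?_⟩
  · rcases (hx t.length).1 with h | h
    · exact h.eq_of_length (seqRestrict_length _ _)
    · exact (h.eq_of_length (seqRestrict_length _ _).symm).symm
  · have := (hx (i + 1)).2 i (by simp [seqRestrict_length]) hi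
    rwa [getElem_seqRestrict] at this

lemma eq_of_mem_branches_parityTree {t : List ℕ} {a b c : ℕ → Bool} {x y : ℕ → ℕ}
    (hxa : x ∈ branches (parityTree [] a)) (hyb : y ∈ branches (parityTree [] b))
    (hxc : x ∈ branches (parityTree t c)) (hyc : y ∈ branches (parityTree t c)) : a = b := by
  funext i
  rw [← (mem_branches_parityTree hxa).2 i (Nat.zero_le i),
    ← (mem_branches_parityTree hyb).2 i (Nat.zero_le i)]
  obtain ⟨hxt, hxc⟩ := mem_branches_parityTree hxc
  obtain ⟨hyt, hyc⟩ := mem_branches_parityTree hyc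
  rcases Nat.lt_or_ge i t.length with hi | hi
  · rw [seqRestrict_eq_iff.mp (hxt.trans hyt.symm) i hi]
  · rw [hxc i hi, hyc i hi]

noncomputable def laverDeriv (U : Set (List ℕ)) (ξ : Ordinal.{0}) : Set (List ℕ) :=
  {t | t ∈ U ∧ ∀ ζ < ξ, {n : ℕ | t ++ [n] ∈ laverDeriv U ζ}.Infinite}
termination_by ξ

-- the nodes of `U` from which a Laver tree inside `U` grows
def laverCore (U : Set (List ℕ)) : Set (List ℕ) := ⋂ ξ, laverDeriv U ξ

lemma mem_laverDeriv {U : Set (List ℕ)} {ξ : Ordinal.{0}} {t : List ℕ} :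
    t ∈ laverDeriv U ξ ↔
      t ∈ U ∧ ∀ ζ < ξ, {n : ℕ | t ++ [n] ∈ laverDeriv U ζ}.Infinite := by
  rw [laverDeriv]
  rfl

lemma laverDeriv_antitone (U : Set (List ℕ)) : Antitone (laverDeriv U) := fun _ _ hξ _ ht =>
  have ht := mem_laverDeriv.mp ht
  mem_laverDeriv.mpr ⟨ht.1, fun ζ hζ => ht.2 ζ (hζ.trans_le hξ)⟩

lemma laverCore_subset (U : Set (List ℕ)) : laverCore U ⊆ U := fun _ ht =>
  (mem_laverDeriv.mp (Set.mem_iInter.mp ht 0)).1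

lemma infinite_succ_mem_laverCore {U : Set (List ℕ)} {t : List ℕ} (ht : t ∈ laverCore U) :
    {n : ℕ | t ++ [n] ∈ laverCore U}.Infinite := by
  classical
  -- a child outside the core has left the derivatives by stage `δ n`, so the infinitely many
  -- children that survive to stage `⨆ n, δ n` all lie in the core
  let δ (n : ℕ) : Ordinal.{0} := sInf {ξ | t ++ [n] ∉ laverDeriv U ξ}
  refine ((mem_laverDeriv.mp (Set.mem_iInter.mp ht (Order.succ (⨆ n, δ n)))).2 _
    (Order.lt_succ _)).mono fun n hn => Set.mem_iInter.mpr fun ξ => ?_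
  by_contra hξ
  exact csInf_mem (s := {ξ | t ++ [n] ∉ laverDeriv U ξ}) ⟨ξ, hξ⟩
    (laverDeriv_antitone U (le_ciSup Ordinal.bddAbove_of_small n) hn)

lemma exists_isLaverWithStem_of_infinite_succ {W : Set (List ℕ)}
    (hW : ∀ t ∈ W, {n : ℕ | t ++ [n] ∈ W}.Infinite) {t₀ : List ℕ} (ht₀ : t₀ ∈ W) :
    ∃ R, IsLaverWithStem R t₀ ∧ ∀ s ∈ R, s <+: t₀ ∨ s ∈ W := by
  let R : Set (List ℕ) :=
    {s | (s <+: t₀ ∨ t₀ <+: s) ∧ ∀ u, t₀ <+: u → u <+: s → u ∈ W}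
  have hR_mem : ∀ s ∈ R, t₀ <+: s → s ∈ W := fun s hs hts =>
    hs.2 s hts (List.prefix_refl s)
  have ht₀R : t₀ ∈ R := ⟨Or.inl (List.prefix_refl t₀), fun u htu hut => by
    rwa [List.IsPrefix.eq_of_length hut (le_antisymm hut.length_le htu.length_le)]⟩
  refine ⟨R, ⟨⟨⟨t₀, ht₀R⟩, ?_⟩, ht₀R, fun s hs => hs.1, ?_⟩, fun s hs => ?_⟩
  · rintro s ⟨hst | hts, hsW⟩ v hvs
    · exact ⟨Or.inl (hvs.trans hst), fun u htu huv => hsW u htu (huv.trans hvs)⟩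
    · exact ⟨List.prefix_or_prefix_of_prefix hvs hts,
        fun u htu huv => hsW u htu (huv.trans hvs)⟩
  · intro s hs hts
    refine (hW s (hR_mem s hs hts)).mono fun n hn => ⟨Or.inr (hts.trans (List.prefix_append _ _)),
      fun u htu hus => ?_⟩
    rcases List.prefix_concat_iff.mp hus with rfl | hus
    · exact hn
    · exact hs.2 u htu hus
  · rcases hs.1 with hst | hts
    · exact Or.inl hst
    · exact Or.inr (hR_mem s hs hts)

lemma compat_of_laverCore_nonempty {S T : Set (List ℕ)} (hS : IsSeqTree S) (hT : IsSeqTree T)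
    (h : (laverCore (S ∩ T)).Nonempty) : Compat laverTrees S T := by
  obtain ⟨t₀, ht₀⟩ := h
  obtain ⟨R, hR, hRW⟩ := exists_isLaverWithStem_of_infinite_succ
    (fun _ => infinite_succ_mem_laverCore) ht₀
  have hRST : R ⊆ S ∩ T := fun s hs => by
    rcases hRW s hs with hst | hsW
    · have ht₀ST := laverCore_subset _ ht₀
      exact ⟨hS.2 _ ht₀ST.1 s hst, hT.2 _ ht₀ST.2 s hst⟩
    · exact laverCore_subset _ hsW
  exact ⟨R, ⟨t₀, hR⟩, fun _ hs => (hRST hs).1, fun _ hs => (hRST hs).2⟩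

lemma exists_rank_of_laverCore_eq_empty {U : Set (List ℕ)} (h : laverCore U = ∅) :
    ∃ (ρ : List ℕ → Ordinal.{0}) (g : List ℕ → ℕ),
      ∀ t ∈ U, ∀ m, g t ≤ m → ρ (t ++ [m]) < ρ t := by
  classical
  have hout : ∀ t, ∃ ξ, t ∉ laverDeriv U ξ := by
    simpa [laverCore, Set.eq_empty_iff_forall_notMem] using h
  let ρ (t : List ℕ) : Ordinal.{0} := sInf {ξ | t ∉ laverDeriv U ξ}
  have hdrop : ∀ t ∈ U, ∃ N, ∀ m, N ≤ m → ρ (t ++ [m]) < ρ t := by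
    intro t ht
    obtain ⟨ζ, hζ, hfin⟩ :
        ∃ ζ < ρ t, {n : ℕ | t ++ [n] ∈ laverDeriv U ζ}.Finite := by
      have hρ : t ∉ laverDeriv U (ρ t) := csInf_mem (hout t)
      rw [mem_laverDeriv] at hρ
      push Not at hρ
      exact hρ ht
    obtain ⟨N, hN⟩ := hfin.bddAbove
    exact ⟨N + 1, fun m hm => (csInf_le' fun hmem => by have := hN hmem; omega).trans_lt hζ⟩
  choose! g hg using hdrop
  exact ⟨ρ, g, hg⟩

def pruneAbove (S : Set (List ℕ)) (k : ℕ) (f : List ℕ → ℕ) : Set (List ℕ) :=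
  {t ∈ S | ∀ i (h : i < t.length), k ≤ i → f (t.take i) < t[i]}

lemma isLaverWithStem_pruneAbove {S : Set (List ℕ)} {st : List ℕ} (hS : IsLaverWithStem S st)
    (f : List ℕ → ℕ) : IsLaverWithStem (pruneAbove S st.length f) st := by
  obtain ⟨⟨-, hclosed⟩, hst, hcomp, hsplit⟩ := hS
  have hstP : st ∈ pruneAbove S st.length f := ⟨hst, fun i hi hsti => by omega⟩
  refine ⟨⟨⟨st, hstP⟩, ?_⟩, hstP, fun t ht => hcomp t ht.1, ?_⟩
  · rintro s ⟨hs, hbig⟩ u hus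
    refine ⟨hclosed s hs u hus, fun i hi hsti => ?_⟩
    obtain ⟨w, rfl⟩ := hus
    have := hbig i (by simp; omega) hsti
    rwa [List.take_append_of_le_length hi.le, List.getElem_append_left hi] at this
  · rintro s ⟨hs, hbig⟩ hsts
    refine ((hsplit s hs hsts).sdiff (Set.finite_le_nat (f s))).mono fun n hn => ⟨hn.1, ?_⟩
    intro i hi hsti
    rcases Nat.lt_or_ge i s.length with his | his
    · rw [List.take_append_of_le_length his.le, List.getElem_append_left his]
      exact hbig i his hsti
    · obtain rfl : i = s.length := by simp at hi; omega
      simpa using hn.2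

lemma lt_of_mem_branches_pruneAbove {S : Set (List ℕ)} {k : ℕ} {f : List ℕ → ℕ}
    {x : ℕ → ℕ} (hx : x ∈ branches (pruneAbove S k f)) {n : ℕ} (hn : k ≤ n) :
    f (seqRestrict x n) < x n := by
  have := (hx (n + 1)).2 n (by simp [seqRestrict_length]) hn
  rwa [getElem_seqRestrict, seqRestrict_succ, List.take_left' (seqRestrict_length x n)] at this

lemma exists_eventually_le_of_mk_lt_boundingNumber {F : Set (ℕ → ℕ)}
    (hF : #F < boundingNumber) :
    ∃ f : ℕ → ℕ, ∀ g ∈ F, ∀ᶠ n in atTop, g n ≤ f n := by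
  by_contra! h
  refine hF.not_ge (csInf_le' ⟨F, rfl, fun f => ?_⟩)
  obtain ⟨g, hg, hgf⟩ := h f
  exact ⟨g, hg, fun hle => hgf (hle.mono fun _ hn => hn.not_gt)⟩

lemma exists_cofinite_le_of_mk_lt_boundingNumber {α : Type} [Denumerable α] {F : Set (α → ℕ)}
    (hF : #F < boundingNumber) :
    ∃ f : α → ℕ, ∀ g ∈ F, ∀ᶠ a in cofinite, g a ≤ f a := by
  let e := Denumerable.eqv α
  obtain ⟨f, hf⟩ := exists_eventually_le_of_mk_lt_boundingNumber
    (F := (· ∘ e.symm) '' F) (mk_image_le.trans_lt hF)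
  refine ⟨f ∘ e, fun g hg => ?_⟩
  have := e.injective.tendsto_cofinite.eventually
    (Nat.cofinite_eq_atTop ▸ hf _ (mem_image_of_mem _ hg))
  simpa using this

lemma IsLaverWithStem.exists_subtree_disjoint_branches {S : Set (List ℕ)} {st : List ℕ}
    (hS : IsLaverWithStem S st) {G : Set (Set (List ℕ))} (hG : #G < boundingNumber)
    (hGtree : ∀ T ∈ G, IsSeqTree T) (hGinc : ∀ T ∈ G, ¬ Compat laverTrees S T) :
    ∃ S' ⊆ S, IsLaverWithStem S' st ∧ ∀ T ∈ G, Disjoint (branches S') (branches T) := by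
  have hrank : ∀ T ∈ G, ∃ (ρ : List ℕ → Ordinal.{0}) (g : List ℕ → ℕ),
      ∀ t ∈ S ∩ T, ∀ m, g t ≤ m → ρ (t ++ [m]) < ρ t := fun T hT =>
    exists_rank_of_laverCore_eq_empty <| Set.not_nonempty_iff_eq_empty.mp fun hcore =>
      hGinc T hT (compat_of_laverCore_nonempty hS.1 (hGtree T hT) hcore)
  choose! ρ g hg using hrank
  obtain ⟨f, hf⟩ := exists_cofinite_le_of_mk_lt_boundingNumber (F := g '' G)
    (mk_image_le.trans_lt hG)
  refine ⟨pruneAbove S st.length f, fun t ht => ht.1, isLaverWithStem_pruneAbove hS f,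
    fun T hT => Set.disjoint_left.mpr fun x hxS hxT => ?_⟩
  -- along a common branch `x`, eventually `g T ≤ f < x`, so `ρ T` descends
  have hdesc : ∀ᶠ n in atTop, ρ T (seqRestrict x (n + 1)) < ρ T (seqRestrict x n) := by
    have hgf := (seqRestrict_injective x).tendsto_cofinite.eventually
      (hf _ (mem_image_of_mem g hT))
    rw [Nat.cofinite_eq_atTop] at hgf
    filter_upwards [hgf, eventually_ge_atTop st.length] with n hgn hn
    rw [seqRestrict_succ]
    exact hg T hT _ ⟨(hxS n).1, hxT n⟩ _ (hgn.trans (lt_of_mem_branches_pruneAbove hxS hn).le)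
  obtain ⟨N, hN⟩ := hdesc.exists_forall_of_atTop
  exact not_strictAnti_of_wellFoundedLT (fun k => ρ T (seqRestrict x (N + k)))
    (strictAnti_nat_of_succ_lt fun k => hN (N + k) (by omega))

def ParityDecisive (T : Set (List ℕ)) : Prop :=
  (∃ t a, T ⊆ parityTree t a) ∨ ∀ t a, ¬ Compat laverTrees T (parityTree t a)

lemma exists_compat_or_parityDecisive_subtree {S : Set (List ℕ)} (hS : IsLaver S)
    {G : Set (Set (List ℕ))} (hG : #G < boundingNumber) (hGL : G ⊆ laverTrees) :
    (∃ T ∈ G, Compat laverTrees S T) ∨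
      ∃ S' ⊆ S, IsLaver S' ∧ ParityDecisive S' ∧
        ∀ T ∈ G, Disjoint (branches S') (branches T) := by
  by_cases hcompat : ∃ T ∈ G, Compat laverTrees S T
  · exact Or.inl hcompat
  push Not at hcompat
  have hpruned : ∀ W ⊆ S, ∀ st, IsLaverWithStem W st →
      ∃ W' ⊆ W, IsLaver W' ∧ ∀ T ∈ G, Disjoint (branches W') (branches T) := by
    intro W hWS st hW
    obtain ⟨W', hW'W, hW', hdisj⟩ := hW.exists_subtree_disjoint_branches hG
      (fun T hT => (hGL hT).elim fun _ h => h.1)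
      fun T hT ⟨R, hR, hRW, hRT⟩ => hcompat T hT ⟨R, hR, hRW.trans hWS, hRT⟩
    exact ⟨W', hW'W, ⟨st, hW'⟩, hdisj⟩
  refine Or.inr ?_
  by_cases hpar : ∃ t a, Compat laverTrees S (parityTree t a)
  · obtain ⟨t, a, W, ⟨st, hW⟩, hWS, hWp⟩ := hpar
    obtain ⟨W', hW'W, hW', hdisj⟩ := hpruned W hWS st hW
    exact ⟨W', hW'W.trans hWS, hW', Or.inl ⟨t, a, hW'W.trans hWp⟩, hdisj⟩
  · push Not at hpar
    obtain ⟨st, hS⟩ := hS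
    obtain ⟨S', hS'S, hS', hdisj⟩ := hpruned S subset_rfl st hS
    exact ⟨S', hS'S, hS', Or.inr fun t a ⟨R, hR, hRS', hRp⟩ =>
      hpar t a ⟨R, hR, hRS'.trans hS'S, hRp⟩, hdisj⟩

lemma continuum_le_mk_of_forall_compat {M : Set (Set (List ℕ))}
    (hmax : ∀ T ∈ laverTrees, ∃ T' ∈ M, Compat laverTrees T T')
    (hdec : ∀ T ∈ M, ParityDecisive T) : 𝔠 ≤ #M := by
  choose T hTM R hR hRa hRT using
    fun a : ℕ → Bool => hmax _ ⟨[], parityTree_isLaverWithStem [] a⟩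
  choose x hx using fun a => (hR a).elim fun _ h => h.branches_nonempty
  have hinj : Function.Injective fun a => (⟨T a, hTM a⟩ : M) := by
    intro a b hab
    have hab : T a = T b := congrArg Subtype.val hab
    obtain ⟨t, c, htc⟩ := (hdec _ (hTM a)).resolve_right fun h =>
      h [] a ⟨R a, hR a, hRT a, hRa a⟩
    exact eq_of_mem_branches_parityTree (branches_mono (hRa a) (hx a))
      (branches_mono (hRa b) (hx b)) (branches_mono ((hRT a).trans htc) (hx a))
      (branches_mono ((hRT b).trans (hab ▸ htc)) (hx b))
  simpa using mk_le_of_injective hinj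

def priorValues {ι α : Type*} [LT ι] (m : ι → Option α) (i : ι) : Set α :=
  {a | ∃ j < i, m j = some a}

lemma mk_priorValues_le {ι α : Type u} [Preorder ι] (m : ι → Option α) (i : ι) :
    #(priorValues m i) ≤ #(Iio i) :=
  calc #(priorValues m i)
    _ = #(some '' priorValues m i) := (mk_image_eq (Option.some_injective _)).symm
    _ ≤ #(range fun j : Iio i => m j) := mk_le_mk_of_subset fun _ ⟨_, ⟨j, hj, hja⟩, ha⟩ =>
      ⟨⟨j, hj⟩, hja.trans ha⟩
    _ ≤ #(Iio i) := mk_range_le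

lemma exists_greedy_transfinite {ι α : Type*} [LT ι] [WellFoundedLT ι]
    (P : ι → Set α → α → Prop) :
    ∃ m : ι → Option α, ∀ i, (∀ a, m i = some a → P i (priorValues m i) a) ∧
      (m i = none → ∀ a, ¬ P i (priorValues m i) a) := by
  classical
  let step (i : ι) (prev : ∀ j < i, Option α) : Option α :=
    if h : ∃ a, P i {a | ∃ j, ∃ hj : j < i, prev j hj = some a} a then some h.choose else none
  let m := wellFounded_lt.fix step
  refine ⟨m, fun i => ?_⟩
  have hm : m i = step i (fun j _ => m j) := wellFounded_lt.fix_eq step i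
  have hprior : {a | ∃ j, ∃ _ : j < i, m j = some a} = priorValues m i := by
    ext
    simp [priorValues]
  simp only [step, hprior] at hm
  split_ifs at hm with h
  · rw [hm]
    exact ⟨fun a ha => Option.some_injective _ ha ▸ h.choose_spec, fun hnone => nomatch hnone⟩
  · push Not at h
    rw [hm]
    exact ⟨fun _ ha => (nomatch ha), fun _ => h⟩

lemma mk_set_list_nat : #(Set (List ℕ)) = 𝔠 := by
  rw [mk_set, mk_list_eq_aleph0, two_power_aleph0]

theorem exists_maximal_parityDecisive_family (hb : 𝔠 ≤ boundingNumber) :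
    ∃ M ⊆ laverTrees, M.PairwiseDisjoint branches ∧
      (∀ T ∈ laverTrees, ∃ T' ∈ M, Compat laverTrees T T') ∧
      ∀ T ∈ M, ParityDecisive T := by
  let ι := (#(Set (List ℕ))).ord.ToType
  have hι : #ι = #(Set (List ℕ)) := by rw [mk_toType, card_ord]
  obtain ⟨e⟩ := Cardinal.eq.mp hι
  have hstage (i : ι) : #(Iio i) < boundingNumber :=
    (mk_Iio_lt i (by rw [hι, Ordinal.type_toType])).trans_le (hι.trans mk_set_list_nat ▸ hb)
  obtain ⟨m, hm⟩ := exists_greedy_transfinite fun (i : ι) E T =>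
    T ⊆ e i ∧ IsLaver T ∧ ParityDecisive T ∧
      ∀ T' ∈ E, Disjoint (branches T) (branches T')
  refine ⟨{T | ∃ i, m i = some T}, fun T ⟨i, hi⟩ => ((hm i).1 T hi).2.1, ?_, ?_,
    fun T ⟨i, hi⟩ => ((hm i).1 T hi).2.2.1⟩
  · rintro S ⟨i, hi⟩ T ⟨j, hj⟩ hST
    rcases lt_trichotomy i j with hij | rfl | hji
    · exact (((hm j).1 T hj).2.2.2 S ⟨i, hij, hi⟩).symm
    · exact absurd (Option.some_injective _ (hi.symm.trans hj)) hST
    · exact ((hm i).1 S hi).2.2.2 T ⟨j, hji, hj⟩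
  · intro T hT
    obtain ⟨i, rfl⟩ := e.surjective T
    cases hmi : m i with
    | some T' =>
      obtain ⟨hT'e, hT', -⟩ := (hm i).1 T' hmi
      exact ⟨T', ⟨i, hmi⟩, T', hT', hT'e, subset_rfl⟩
    | none =>
      rcases exists_compat_or_parityDecisive_subtree hT
          ((mk_priorValues_le m i).trans_lt (hstage i))
          (fun T' ⟨j, _, hj⟩ => ((hm j).1 T' hj).2.1) with
        ⟨T', ⟨j, -, hj⟩, hcompat⟩ | ⟨S', hS'e, hS', hdec, hdisj⟩
      · exact ⟨T', ⟨j, hj⟩, hcompat⟩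
      · exact absurd ⟨hS'e, hS', hdec, hdisj⟩ ((hm i).2 hmi S')

/-- Assuming `𝔟 = 𝔠`, Laver forcing has the disjoint maximal antichain property: there is a
maximal antichain `(T_α : α < 𝔠)` of Laver trees with pairwise disjoint branch sets. -/
theorem laver_disjointMaxAntichain_of_b_eq_c (hb : boundingNumber = Cardinal.continuum) :
    ∃ (ι : Type) (Tfam : ι → Set (List ℕ)),
      Cardinal.mk ι = Cardinal.continuum ∧
      (∀ a : ι, IsLaver (Tfam a)) ∧
      (∀ a b : ι, a ≠ b →
        ¬ ∃ R : Set (List ℕ), IsLaver R ∧ R ⊆ Tfam a ∧ R ⊆ Tfam b) ∧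
      (∀ T : Set (List ℕ), IsLaver T →
        ∃ a : ι, ∃ R : Set (List ℕ), IsLaver R ∧ R ⊆ T ∧ R ⊆ Tfam a) ∧
      (∀ a b : ι, a ≠ b → branches (Tfam a) ∩ branches (Tfam b) = ∅) := by
  obtain ⟨M, hML, hMdisj, hMmax, hMdec⟩ := exists_maximal_parityDecisive_family hb.ge
  have hdisj (a b : M) (hab : a ≠ b) : Disjoint (branches a) (branches b) :=
    hMdisj a.2 b.2 (Subtype.coe_injective.ne hab)
  refine ⟨M, Subtype.val, le_antisymm ((mk_set_le M).trans mk_set_list_nat.le)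
    (continuum_le_mk_of_forall_compat hMmax hMdec), fun T => hML T.2,
    fun a b hab => not_compat_of_disjoint_branches (hdisj a b hab), fun T hT => ?_,
    fun a b hab => Set.disjoint_iff_inter_eq_empty.mp (hdisj a b hab)⟩
  obtain ⟨T', hT'M, hcompat⟩ := hMmax T hT
  exact ⟨⟨T', hT'M⟩, hcompat⟩
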